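/- arXiv:2502.06515 — 2 statements merged into one kernel-verified Lean document; each statement's English description precedes it below -/
import Mathlib

section
/- In a financial network without default cost, suppose the external assets of a designated source bank s (with no incoming edges) are varied within an interval on which the set of solvent banks in the clearing state is invariant. Then the clearing assets of every bank are non-decreasing affine (linear plus constant) functions of a_s^x on that interval. -/
open Finset

/-- A financial network: liabilities `liab u v` on edge (u,v) (0 if absent) and
external assets `ext v`. -/
structure Network (V : Type) [Fintype V] where
  liab : V → V → ℝ
  ext : V → ℝ

variable {V : Type} [Fintype V] [DecidableEq V]

/-- Total liabilities `L_v` of bank `v`. -/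
def totalLiab [Fintype V] (N : Network V) (v : V) : ℝ := ∑ u, N.liab v u

/-- Total assets of `v` given recovery rates `r`. -/
def assets [Fintype V] (N : Network V) (r : V → ℝ) (v : V) : ℝ :=
  N.ext v + ∑ u, r u * N.liab u v

/-- The update map `r ↦ min(a_v(r)/L_v, 1)` (interpreted as 1 when `L_v = 0`). -/
noncomputable def updateMap [Fintype V] (N : Network V) (r : V → ℝ) (v : V) : ℝ :=
  if totalLiab N v ≤ assets N r v then 1 else assets N r v / totalLiab N v

/-- The update map with default cost `δ`. -/
noncomputable def updateMapD [Fintype V] (N : Network V) (δ : ℝ) (r : V → ℝ) (v : V) : ℝ :=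
  if totalLiab N v ≤ assets N r v then 1 else δ * assets N r v / totalLiab N v

/-- `r` lies in the box `[0,1]^V`. -/
def inBox (r : V → ℝ) : Prop := ∀ v, r v ∈ Set.Icc (0:ℝ) 1

/-- The clearing state: the componentwise greatest fixed point of the update map in `[0,1]^V`. -/
noncomputable def IsClearing [Fintype V] (N : Network V) (r : V → ℝ) : Prop :=
  inBox r ∧ updateMap N r = r ∧ ∀ r', inBox r' → updateMap N r' = r' → r' ≤ r

/-- The clearing state with default cost `δ`. -/
noncomputable def IsClearingD [Fintype V] (N : Network V) (δ : ℝ) (r : V → ℝ) : Prop :=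
  inBox r ∧ updateMapD N δ r = r ∧ ∀ r', inBox r' → updateMapD N δ r' = r' → r' ≤ r

/-- The network `N` with the external assets of the designated bank `s` replaced by `t`. -/
noncomputable def withSource {n : ℕ} (N : Network (Fin n)) (s : Fin n) (t : ℝ) :
    Network (Fin n) :=
  ⟨N.liab, fun b => if b = s then t else N.ext b⟩

-- AUX
lemma sum_comb (c0 c1 : ℝ) (f g w : V → ℝ) :
    ∑ u, (c0 * f u + c1 * g u) * w u = c0 * ∑ u, f u * w u + c1 * ∑ u, g u * w u := by
  rw [Finset.mul_sum, Finset.mul_sum, ← Finset.sum_add_distrib]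
  exact Finset.sum_congr rfl fun u _ => by ring

lemma assets_sub (N : Network V) (r1 r2 : V → ℝ) (v : V) :
    assets N r1 v - assets N r2 v = ∑ u, (r1 u - r2 u) * N.liab u v := by
  simp only [assets]
  rw [Finset.sum_congr rfl
    (fun u _ => by ring : ∀ u ∈ univ, (r1 u - r2 u) * N.liab u v
      = r1 u * N.liab u v - r2 u * N.liab u v), Finset.sum_sub_distrib]
  ring

lemma assets_withSource {n : ℕ} (N : Network (Fin n)) (s : Fin n) (t : ℝ) (r : Fin n → ℝ)
    (v : Fin n) :
    assets (withSource N s t) r v = (if v = s then t else N.ext v) + ∑ u, r u * N.liab u v := rfl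

lemma totalLiab_withSource {n : ℕ} (N : Network (Fin n)) (s : Fin n) (t : ℝ) :
    totalLiab (withSource N s t) = totalLiab N := rfl

lemma withSource_liab {n : ℕ} (N : Network (Fin n)) (s : Fin n) (t : ℝ) :
    (withSource N s t).liab = N.liab := rfl

lemma assets_nonneg (N : Network V) (hl : ∀ a b, 0 ≤ N.liab a b) (he : ∀ b, 0 ≤ N.ext b)
    {r : V → ℝ} (hr : inBox r) (v : V) : 0 ≤ assets N r v := by
  unfold assets
  have : (0:ℝ) ≤ ∑ u, r u * N.liab u v :=
    Finset.sum_nonneg fun u _ => mul_nonneg (hr u).1 (hl u v)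
  linarith [he v]

lemma updateMap_mem (N : Network V) (hl : ∀ a b, 0 ≤ N.liab a b) (he : ∀ b, 0 ≤ N.ext b)
    {r : V → ℝ} (hr : inBox r) (v : V) : updateMap N r v ∈ Set.Icc (0:ℝ) 1 := by
  unfold updateMap
  split
  · exact ⟨zero_le_one, le_refl 1⟩
  · rename_i h
    have ha := assets_nonneg N hl he hr v
    have hL : 0 < totalLiab N v := lt_of_le_of_lt ha (lt_of_not_ge h)
    exact ⟨by positivity, le_of_lt ((div_lt_one hL).2 (lt_of_not_ge h))⟩

lemma update_le {L a a' : ℝ} (ha : 0 ≤ a) (h : a ≤ a') :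
    (if L ≤ a then (1:ℝ) else a / L) ≤ (if L ≤ a' then 1 else a' / L) := by
  by_cases h1 : L ≤ a
  · simp [h1, h1.trans h]
  · have hL : 0 < L := lt_of_le_of_lt ha (lt_of_not_ge h1)
    by_cases h2 : L ≤ a'
    · rw [if_neg h1, if_pos h2]
      exact le_of_lt ((div_lt_one hL).2 (lt_of_not_ge h1))
    · rw [if_neg h1, if_neg h2]
      exact (div_le_div_iff_of_pos_right hL).2 h

lemma updateMap_le_updateMap (N N' : Network V) (hL : totalLiab N = totalLiab N')
    {r r' : V → ℝ} (v : V) (ha : 0 ≤ assets N r v) (hle : assets N r v ≤ assets N' r' v) :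
    updateMap N r v ≤ updateMap N' r' v := by
  unfold updateMap
  rw [← hL]
  exact update_le ha hle

lemma assets_le_assets (N : Network V) (hl : ∀ a b, 0 ≤ N.liab a b) {r r' : V → ℝ}
    (h : ∀ u, r u ≤ r' u) (v : V) : assets N r v ≤ assets N r' v :=
  add_le_add_right (Finset.sum_le_sum fun u _ => mul_le_mul_of_nonneg_right (h u) (hl u v)) _

lemma le_clearing_of_postfixed (N : Network V) (hl : ∀ a b, 0 ≤ N.liab a b)
    (he : ∀ b, 0 ≤ N.ext b) {r r' : V → ℝ} (hr : IsClearing N r)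
    (hb : inBox r') (hpost : ∀ v, r' v ≤ updateMap N r' v) : ∀ v, r' v ≤ r v := by
  haveI : Fact ((0:ℝ) ≤ 1) := ⟨zero_le_one⟩
  let F : (V → Set.Icc (0:ℝ) 1) →o (V → Set.Icc (0:ℝ) 1) :=
    ⟨fun x v => ⟨updateMap N (fun w => (x w : ℝ)) v,
        updateMap_mem N hl he (fun w => (x w).2) v⟩, by
      intro x y hxy v
      exact Subtype.mk_le_mk.2 (updateMap_le_updateMap N N rfl v
        (assets_nonneg N hl he (fun w => (x w).2) v)
        (assets_le_assets N hl (fun u => Subtype.coe_le_coe.2 (hxy u)) v))⟩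
  set g := OrderHom.gfp F with hg
  have hgfix : F g = g := F.isFixedPt_gfp
  have hgbox : inBox (fun v => (g v : ℝ)) := fun v => (g v).2
  have hgfp_update : updateMap N (fun v => (g v : ℝ)) = fun v => (g v : ℝ) := by
    funext v
    exact congrArg Subtype.val (congrFun hgfix v)
  have h1 : (fun v => (g v : ℝ)) ≤ r := hr.2.2 _ hgbox hgfp_update
  have hx : (fun v => (⟨r' v, hb v⟩ : Set.Icc (0:ℝ) 1)) ≤ F (fun v => ⟨r' v, hb v⟩) := by
    intro v
    show r' v ≤ updateMap N (fun w => r' w) v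
    exact hpost v
  have h2 := F.le_gfp hx
  intro v
  exact le_trans (Subtype.coe_le_coe.2 (h2 v)) (h1 v)



/-- Without default cost: varying the external assets of a source bank `s` on an interval
on which the solvent set of the clearing state is invariant, the clearing assets of every
bank are non-decreasing affine functions of `a_s^x`. -/
theorem stmt_9 {n : ℕ} (N : Network (Fin n)) (s : Fin n)
    (hliab : ∀ a b, 0 ≤ N.liab a b) (hext : ∀ b, 0 ≤ N.ext b)
    (hsource : ∀ u, N.liab u s = 0)
    (I : Set ℝ) (hI : I.OrdConnected) (hI0 : ∀ t ∈ I, 0 ≤ t)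
    (R : ℝ → Fin n → ℝ) (hR : ∀ t ∈ I, IsClearing (withSource N s t) (R t))
    (S : Set (Fin n))
    (hS : ∀ t ∈ I,
      {b | totalLiab (withSource N s t) b ≤ assets (withSource N s t) (R t) b} = S) :
    ∀ b, ∃ c d : ℝ, 0 ≤ c ∧
      ∀ t ∈ I, assets (withSource N s t) (R t) b = c * t + d := by
  classical
  have hext' : ∀ t ∈ I, ∀ b, 0 ≤ (withSource N s t).ext b := by
    intro t ht b
    show (0:ℝ) ≤ if b = s then t else N.ext b
    split
    · exact hI0 t ht
    · exact hext b
  have hbox : ∀ t ∈ I, inBox (R t) := fun t ht => (hR t ht).1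
  have hfixp : ∀ t ∈ I, ∀ v, R t v = updateMap (withSource N s t) (R t) v :=
    fun t ht v => (congrFun (hR t ht).2.1 v).symm
  have hsolv : ∀ t ∈ I, ∀ v, v ∈ S ↔ totalLiab N v ≤ assets (withSource N s t) (R t) v := by
    intro t ht v
    rw [← hS t ht]
    exact Iff.rfl
  have hass_nn : ∀ t ∈ I, ∀ v, 0 ≤ assets (withSource N s t) (R t) v :=
    fun t ht v => assets_nonneg (withSource N s t) hliab (hext' t ht) (hbox t ht) v
  have hone : ∀ t ∈ I, ∀ v ∈ S, R t v = 1 := by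
    intro t ht v hv
    rw [hfixp t ht v, updateMap, totalLiab_withSource, if_pos ((hsolv t ht v).1 hv)]
  have hins : ∀ t ∈ I, ∀ v ∉ S,
      assets (withSource N s t) (R t) v < totalLiab N v ∧ 0 < totalLiab N v := by
    intro t ht v hv
    have h1 : ¬ totalLiab N v ≤ assets (withSource N s t) (R t) v :=
      fun h => hv ((hsolv t ht v).2 h)
    have h2 := lt_of_not_ge h1
    exact ⟨h2, lt_of_le_of_lt (hass_nn t ht v) h2⟩
  have hvalue : ∀ t ∈ I, ∀ v ∉ S,
      R t v = assets (withSource N s t) (R t) v / totalLiab N v := by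
    intro t ht v hv
    rw [hfixp t ht v, updateMap, totalLiab_withSource, if_neg (not_le.2 (hins t ht v hv).1)]
  have hlt1 : ∀ t ∈ I, ∀ v ∉ S, R t v < 1 := by
    intro t ht v hv
    rw [hvalue t ht v hv]
    exact (div_lt_one (hins t ht v hv).2).2 (hins t ht v hv).1
  -- the clearing vector combines affinely
  have hcomb : ∀ t0 ∈ I, ∀ t1 ∈ I, ∀ l : ℝ, 0 ≤ l → l ≤ 1 →
      (l * t0 + (1 - l) * t1) ∈ I ∧
      ∀ v, R (l * t0 + (1 - l) * t1) v = l * R t0 v + (1 - l) * R t1 v := by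
    intro t0 ht0 t1 ht1 l hl0 hl1
    have ht : (l * t0 + (1 - l) * t1) ∈ I := by
      rcases le_total t0 t1 with h | h
      · exact hI.out ht0 ht1 ⟨by nlinarith, by nlinarith⟩
      · exact hI.out ht1 ht0 ⟨by nlinarith, by nlinarith⟩
    refine ⟨ht, ?_⟩
    have hA : ∀ v, assets (withSource N s (l * t0 + (1 - l) * t1))
        (fun w => l * R t0 w + (1 - l) * R t1 w) v =
        l * assets (withSource N s t0) (R t0) v
          + (1 - l) * assets (withSource N s t1) (R t1) v := by
      intro v
      simp only [assets_withSource, sum_comb]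
      by_cases hv : v = s
      · rw [if_pos hv, if_pos hv, if_pos hv]; ring
      · rw [if_neg hv, if_neg hv, if_neg hv]; ring
    have hAS : ∀ v ∈ S, totalLiab N v ≤ assets (withSource N s (l * t0 + (1 - l) * t1))
        (fun w => l * R t0 w + (1 - l) * R t1 w) v := by
      intro v hv
      rw [hA v]
      have h0 := (hsolv t0 ht0 v).1 hv
      have h1 := (hsolv t1 ht1 v).1 hv
      nlinarith [mul_nonneg hl0 (sub_nonneg.2 h0),
        mul_nonneg (sub_nonneg.2 hl1) (sub_nonneg.2 h1)]
    have hAN : ∀ v ∉ S, assets (withSource N s (l * t0 + (1 - l) * t1))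
        (fun w => l * R t0 w + (1 - l) * R t1 w) v < totalLiab N v := by
      intro v hv
      rw [hA v]
      have h0 := (hins t0 ht0 v hv).1
      have h1 := (hins t1 ht1 v hv).1
      rcases eq_or_lt_of_le hl0 with h | h
      · rw [← h]; linarith
      · nlinarith [mul_nonneg (sub_nonneg.2 hl1) (sub_nonneg.2 h1.le)]
    have hfr : updateMap (withSource N s (l * t0 + (1 - l) * t1))
        (fun w => l * R t0 w + (1 - l) * R t1 w) =
        fun w => l * R t0 w + (1 - l) * R t1 w := by
      funext v
      rw [updateMap, totalLiab_withSource]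
      by_cases hv : v ∈ S
      · rw [if_pos (hAS v hv), hone t0 ht0 v hv, hone t1 ht1 v hv]; ring
      · rw [if_neg (not_le.2 (hAN v hv)), hA v, hvalue t0 ht0 v hv, hvalue t1 ht1 v hv]
        have hLv := (hins t0 ht0 v hv).2
        field_simp
      -- r is in the box
    have hbr : inBox (fun w => l * R t0 w + (1 - l) * R t1 w) := by
      intro w
      have h0 := (hbox t0 ht0) w
      have h1 := (hbox t1 ht1) w
      constructor
      · have := mul_nonneg hl0 h0.1
        have := mul_nonneg (sub_nonneg.2 hl1) h1.1
        simp only [Set.mem_Icc] at *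
        linarith
      · have := mul_le_mul_of_nonneg_left h0.2 hl0
        have := mul_le_mul_of_nonneg_left h1.2 (sub_nonneg.2 hl1)
        simp only [Set.mem_Icc] at *
        nlinarith
    have hler := (hR _ ht).2.2 _ hbr hfr
    intro v
    by_contra hne
    have hu_nn : ∀ w, 0 ≤ R (l * t0 + (1 - l) * t1) w - (l * R t0 w + (1 - l) * R t1 w) :=
      fun w => sub_nonneg.2 (hler w)
    have hu_v : 0 < R (l * t0 + (1 - l) * t1) v - (l * R t0 v + (1 - l) * R t1 v) :=
      lt_of_le_of_ne (hu_nn v) (fun h => hne (by linarith [h.symm]))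
    have huS : ∀ w ∈ S, R (l * t0 + (1 - l) * t1) w - (l * R t0 w + (1 - l) * R t1 w) = 0 := by
      intro w hw
      rw [hone _ ht w hw, hone t0 ht0 w hw, hone t1 ht1 w hw]; ring
    have hvS : v ∉ S := fun hvS => by
      rw [huS v hvS] at hu_v; exact lt_irrefl 0 hu_v
    have huEq : ∀ w ∉ S, totalLiab N w *
        (R (l * t0 + (1 - l) * t1) w - (l * R t0 w + (1 - l) * R t1 w)) =
        ∑ x, (R (l * t0 + (1 - l) * t1) x - (l * R t0 x + (1 - l) * R t1 x)) * N.liab x w := by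
      intro w hw
      have hLw := (hins _ ht w hw).2
      have h1 : totalLiab N w * R (l * t0 + (1 - l) * t1) w =
          assets (withSource N s (l * t0 + (1 - l) * t1)) (R (l * t0 + (1 - l) * t1)) w := by
        rw [hvalue _ ht w hw]; field_simp
      have h2 : totalLiab N w * (l * R t0 w + (1 - l) * R t1 w) =
          assets (withSource N s (l * t0 + (1 - l) * t1))
            (fun x => l * R t0 x + (1 - l) * R t1 x) w := by
        have := congrFun hfr w
        rw [updateMap, totalLiab_withSource, if_neg (not_le.2 (hAN w hw))] at this
        rw [← this]; field_simp
      have h3 := assets_sub (withSource N s (l * t0 + (1 - l) * t1))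
        (R (l * t0 + (1 - l) * t1)) (fun x => l * R t0 x + (1 - l) * R t1 x) w
      simp only [withSource_liab] at h3
      linear_combination h1 - h2 + h3
    -- perturbation
    set T : Finset (Fin n) := Finset.univ.filter (fun w => w ∉ S) with hT
    have hTne : T.Nonempty := ⟨v, Finset.mem_filter.2 ⟨Finset.mem_univ v, hvS⟩⟩
    set u : Fin n → ℝ := fun w =>
      R (l * t0 + (1 - l) * t1) w - (l * R t0 w + (1 - l) * R t1 w) with hu
    have hu_nn' : ∀ w, 0 ≤ u w := hu_nn
    have hu_v' : 0 < u v := hu_v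
    have huS' : ∀ w ∈ S, u w = 0 := huS
    have huEq' : ∀ w ∉ S, totalLiab N w * u w = ∑ x, u x * N.liab x w := huEq
    set eps : ℝ := T.inf' hTne (fun w => (1 - R (l * t0 + (1 - l) * t1) w) / (u w + 1))
      with heps
    have heps_pos : 0 < eps := by
      rw [heps, Finset.lt_inf'_iff]
      intro w hw
      have hwS := (Finset.mem_filter.1 hw).2
      exact div_pos (by linarith [hlt1 _ ht w hwS]) (by linarith [hu_nn' w])
    have hkey : ∀ w ∉ S, eps * u w < 1 - R (l * t0 + (1 - l) * t1) w := by
      intro w hw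
      have h1 : eps ≤ (1 - R (l * t0 + (1 - l) * t1) w) / (u w + 1) :=
        Finset.inf'_le _ (Finset.mem_filter.2 ⟨Finset.mem_univ w, hw⟩)
      have h2 : (0:ℝ) < u w + 1 := by linarith [hu_nn' w]
      have h3 := (le_div_iff₀ h2).1 h1
      nlinarith
    have hbox2 : inBox (fun w => R (l * t0 + (1 - l) * t1) w + eps * u w) := by
      intro w
      constructor
      · exact add_nonneg ((hbox _ ht) w).1 (mul_nonneg heps_pos.le (hu_nn' w))
      · show R (l * t0 + (1 - l) * t1) w + eps * u w ≤ 1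
        by_cases hw : w ∈ S
        · rw [huS' w hw]
          have := ((hbox _ ht) w).2
          linarith
        · have := hkey w hw
          linarith
    have hfix2 : updateMap (withSource N s (l * t0 + (1 - l) * t1))
        (fun w => R (l * t0 + (1 - l) * t1) w + eps * u w) =
        fun w => R (l * t0 + (1 - l) * t1) w + eps * u w := by
      funext w
      have hA2 : assets (withSource N s (l * t0 + (1 - l) * t1))
          (fun x => R (l * t0 + (1 - l) * t1) x + eps * u x) w =
          assets (withSource N s (l * t0 + (1 - l) * t1)) (R (l * t0 + (1 - l) * t1)) w
            + eps * ∑ x, u x * N.liab x w := by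
        have h3 := assets_sub (withSource N s (l * t0 + (1 - l) * t1))
          (fun x => R (l * t0 + (1 - l) * t1) x + eps * u x) (R (l * t0 + (1 - l) * t1)) w
        simp only [add_sub_cancel_left, withSource_liab] at h3
        rw [Finset.mul_sum]
        rw [Finset.sum_congr rfl (fun x _ => by ring :
          ∀ x ∈ univ, eps * u x * N.liab x w = eps * (u x * N.liab x w))] at h3
        linarith [h3]
      rw [updateMap, totalLiab_withSource]
      by_cases hw : w ∈ S
      · rw [if_pos ?_]
        · rw [huS' w hw, hone _ ht w hw]; ring
        · rw [hA2]
          have hnn : (0:ℝ) ≤ ∑ x, u x * N.liab x w :=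
            Finset.sum_nonneg fun x _ => mul_nonneg (hu_nn' x) (hliab x w)
          have := (hsolv _ ht w).1 hw
          nlinarith [heps_pos]
      · have hLw := (hins _ ht w hw).2
        have haw := (hins _ ht w hw).1
        have hsum : ∑ x, u x * N.liab x w = totalLiab N w * u w := (huEq' w hw).symm
        have hlt : assets (withSource N s (l * t0 + (1 - l) * t1))
            (fun x => R (l * t0 + (1 - l) * t1) x + eps * u x) w < totalLiab N w := by
          rw [hA2, hsum]
          have h4 := hkey w hw
          have h5 : totalLiab N w * R (l * t0 + (1 - l) * t1) w =
              assets (withSource N s (l * t0 + (1 - l) * t1)) (R (l * t0 + (1 - l) * t1)) w := by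
            rw [hvalue _ ht w hw]; field_simp
          nlinarith
        rw [if_neg (not_le.2 hlt), hA2, hsum, hvalue _ ht w hw]
        field_simp
    have hle2 := (hR _ ht).2.2 _ hbox2 hfix2
    have := hle2 v
    simp only [] at this
    nlinarith [mul_pos heps_pos hu_v']
  -- monotonicity of the clearing vector
  have hmono : ∀ t0 ∈ I, ∀ t1 ∈ I, t0 ≤ t1 → ∀ w, R t0 w ≤ R t1 w := by
    intro t0 ht0 t1 ht1 h01
    refine le_clearing_of_postfixed (withSource N s t1) hliab (hext' t1 ht1)
      (hR t1 ht1) (hbox t0 ht0) ?_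
    intro w
    rw [hfixp t0 ht0 w]
    refine updateMap_le_updateMap (withSource N s t0) (withSource N s t1) rfl w
      (hass_nn t0 ht0 w) ?_
    rw [assets_withSource, assets_withSource]
    by_cases hw : w = s
    · rw [if_pos hw, if_pos hw]; linarith
    · rw [if_neg hw, if_neg hw]
  intro b
  -- the assets of bank b as a function of t
  have hgc : ∀ t0 ∈ I, ∀ t1 ∈ I, ∀ l : ℝ, 0 ≤ l → l ≤ 1 →
      assets (withSource N s (l * t0 + (1 - l) * t1)) (R (l * t0 + (1 - l) * t1)) b =
      l * assets (withSource N s t0) (R t0) b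
        + (1 - l) * assets (withSource N s t1) (R t1) b := by
    intro t0 ht0 t1 ht1 l hl0 hl1
    obtain ⟨ht, hRv⟩ := hcomb t0 ht0 t1 ht1 l hl0 hl1
    simp only [assets_withSource]
    rw [Finset.sum_congr rfl (fun x _ => by rw [hRv x] :
      ∀ x ∈ univ, R (l * t0 + (1 - l) * t1) x * N.liab x b
        = (l * R t0 x + (1 - l) * R t1 x) * N.liab x b), sum_comb]
    by_cases hb : b = s
    · rw [if_pos hb, if_pos hb, if_pos hb]; ring
    · rw [if_neg hb, if_neg hb, if_neg hb]; ring
  have hgm : ∀ t0 ∈ I, ∀ t1 ∈ I, t0 ≤ t1 →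
      assets (withSource N s t0) (R t0) b ≤ assets (withSource N s t1) (R t1) b := by
    intro t0 ht0 t1 ht1 h01
    rw [assets_withSource, assets_withSource]
    have hsum : ∑ x, R t0 x * N.liab x b ≤ ∑ x, R t1 x * N.liab x b :=
      Finset.sum_le_sum fun x _ =>
        mul_le_mul_of_nonneg_right (hmono t0 ht0 t1 ht1 h01 x) (hliab x b)
    by_cases hb : b = s
    · rw [if_pos hb, if_pos hb]; linarith
    · rw [if_neg hb, if_neg hb]; linarith
  -- three-point identity
  have hmid : ∀ p ∈ I, ∀ q ∈ I, ∀ z ∈ I, p ≤ q → q ≤ z →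
      (z - p) * assets (withSource N s q) (R q) b =
      (z - q) * assets (withSource N s p) (R p) b
        + (q - p) * assets (withSource N s z) (R z) b := by
    intro p hp q hq z hz hpq hqz
    rcases eq_or_lt_of_le (hpq.trans hqz) with h | h
    · have hqp : q = p := le_antisymm (h ▸ hqz) hpq
      rw [← h, hqp]; ring
    · have hzp : z - p ≠ 0 := sub_ne_zero.2 (ne_of_gt h)
      have hl0 : 0 ≤ (z - q) / (z - p) := div_nonneg (by linarith) (by linarith)
      have hl1 : (z - q) / (z - p) ≤ 1 := by
        rw [div_le_one (by linarith)]; linarith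
      have hq' : (z - q) / (z - p) * p + (1 - (z - q) / (z - p)) * z = q := by
        field_simp
        ring
      have := hgc p hp z hz ((z - q) / (z - p)) hl0 hl1
      rw [hq'] at this
      rw [this]
      field_simp
      ring
  -- put it together
  have key : ∀ p, p ∈ I → ∀ q, q ∈ I → p < q →
      ∃ c d : ℝ, 0 ≤ c ∧ ∀ t ∈ I, assets (withSource N s t) (R t) b = c * t + d := by
    intro p hp q hq hpq
    refine ⟨(assets (withSource N s q) (R q) b - assets (withSource N s p) (R p) b) / (q - p),
      (q * assets (withSource N s p) (R p) b - p * assets (withSource N s q) (R q) b) / (q - p),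
      div_nonneg (by linarith [hgm p hp q hq hpq.le]) (by linarith), ?_⟩
    intro t ht
    have hE : (q - p) * assets (withSource N s t) (R t) b =
        (q - t) * assets (withSource N s p) (R p) b
          + (t - p) * assets (withSource N s q) (R q) b := by
      rcases le_total t p with h1 | h1
      · have := hmid t ht p hp q hq h1 hpq.le
        linear_combination (-1 : ℝ) * this
      · rcases le_total t q with h2 | h2
        · exact hmid p hp t ht q hq h1 h2
        · have := hmid p hp q hq t ht hpq.le h2
          linear_combination (-1 : ℝ) * this
    have hqp : q - p ≠ 0 := sub_ne_zero.2 (ne_of_gt hpq)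
    rw [div_mul_eq_mul_div, ← add_div, eq_div_iff hqp]
    linear_combination hE
  by_cases hsub : ∀ t0 ∈ I, ∀ t1 ∈ I, t0 = t1
  · by_cases hne : ∃ t', t' ∈ I
    · obtain ⟨t', ht'⟩ := hne
      exact ⟨0, assets (withSource N s t') (R t') b, le_refl 0,
        fun t ht => by rw [hsub t ht t' ht']; ring⟩
    · exact ⟨0, 0, le_refl 0, fun t ht => absurd ⟨t, ht⟩ hne⟩
  · push_neg at hsub
    obtain ⟨t0, ht0, t1, ht1, hne⟩ := hsub
    rcases lt_or_gt_of_ne hne with hlt | hlt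
    · exact key t0 ht0 t1 ht1 hlt
    · exact key t1 ht1 t0 ht0 hlt
end

section
/- In the Set Packing reduction network with default cost delta < 1, any Pareto-positive multi-trade of outgoing edges of u in which some set-bank S_i receives a return 0 < rho_i < M leaves S_i insolvent, and then a positive fraction (1 - delta) * rho_i of the money injected is lost to default cost and cannot return to w; hence in any Pareto-positive trade (which requires a'_w >= a_w = lM), every set-bank with positive return must receive exactly M, and the sets receiving return M must be pairwise disjoint. -/
open Finset

variable {V : Type} [Fintype V] [DecidableEq V]

/-- Banks of the Set Packing reduction network: set-banks `S_i`, element-banks `x_j`,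
and the two special banks `u` (= `.inr 0`) and `w` (= `.inr 1`). -/
abbrev SPBank (k m : ℕ) := (Fin k ⊕ Fin m) ⊕ Fin 2

/-- The debtor bank `u`. -/
def uBank (k m : ℕ) : SPBank k m := Sum.inr 0
/-- The buyer bank `w`. -/
def wBank (k m : ℕ) : SPBank k m := Sum.inr 1
/-- The set-bank of `S_i`. -/
def sBank {k m : ℕ} (i : Fin k) : SPBank k m := Sum.inl (Sum.inl i)
/-- The element-bank of `x_j`. -/
def xBank {k m : ℕ} (j : Fin m) : SPBank k m := Sum.inl (Sum.inr j)

/-- The Set Packing reduction network: `u` owes `M` to each `S_i`; `S_i` owes 1 to each of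
its element-banks and `M − |S_i|` to `w`; each `x_j` owes 1 to `w`; `w` has external
assets `l·M`, everything else has external assets 0. -/
noncomputable def spNet {k m : ℕ} (Sets : Fin k → Finset (Fin m)) (M : ℝ) (l : ℕ) :
    Network (SPBank k m) where
  liab a b :=
    match a, b with
    | Sum.inr x, Sum.inl (Sum.inl _) => if x = 0 then M else 0
    | Sum.inl (Sum.inl i), Sum.inl (Sum.inr j) => if j ∈ Sets i then 1 else 0
    | Sum.inl (Sum.inl i), Sum.inr y => if y = 1 then M - (Sets i).card else 0
    | Sum.inl (Sum.inr _), Sum.inr y => if y = 1 then 1 else 0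
    | _, _ => 0
  ext b :=
    match b with
    | Sum.inr y => if y = 1 then l * M else 0
    | _ => 0

/-- The Set Packing network after a multi-trade of the outgoing edges `(u, S_i)` of `u`
to buyer `w` with fractions `β i` and returns `ρ i`. -/
noncomputable def spPost {k m : ℕ} (Sets : Fin k → Finset (Fin m)) (M : ℝ) (l : ℕ)
    (β ρ : Fin k → ℝ) : Network (SPBank k m) where
  liab a b :=
    match a, b with
    | Sum.inr x, Sum.inl (Sum.inl i) => if x = 0 then (1 - β i) * M else 0
    | Sum.inr x, Sum.inr y => if x = 0 ∧ y = 1 then ∑ i, β i * M else 0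
    | Sum.inl (Sum.inl i), Sum.inl (Sum.inr j) => if j ∈ Sets i then 1 else 0
    | Sum.inl (Sum.inl i), Sum.inr y => if y = 1 then M - (Sets i).card else 0
    | Sum.inl (Sum.inr _), Sum.inr y => if y = 1 then 1 else 0
    | _, _ => 0
  ext b :=
    match b with
    | Sum.inl (Sum.inl i) => ρ i
    | Sum.inr y => if y = 1 then l * M - ∑ i, ρ i else 0
    | _ => 0

section helpers
variable {k m : ℕ} (Sets : Fin k → Finset (Fin m)) (M : ℝ) (l : ℕ) (β ρ : Fin k → ℝ)
  (r : SPBank k m → ℝ)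

lemma tl_u : totalLiab (spPost Sets M l β ρ) (uBank k m) = k * M := by
  simp [totalLiab, spPost, uBank, Fintype.sum_sum_type, Fin.sum_univ_two, sub_mul,
    Finset.sum_sub_distrib]

lemma as_u : assets (spPost Sets M l β ρ) r (uBank k m) = 0 := by
  simp [assets, spPost, uBank, Fintype.sum_sum_type, Fin.sum_univ_two]

lemma tl_s (i : Fin k) :
    totalLiab (spPost Sets M l β ρ) (sBank i) = M := by
  simp [totalLiab, spPost, sBank, Fintype.sum_sum_type, Fin.sum_univ_two]

lemma as_s (hu : r (uBank k m) = 0) (i : Fin k) :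
    assets (spPost Sets M l β ρ) r (sBank i) = ρ i := by
  simp [assets, spPost, sBank, uBank, Fintype.sum_sum_type, Fin.sum_univ_two] at hu ⊢
  simp [hu]

lemma tl_x (j : Fin m) : totalLiab (spPost Sets M l β ρ) (xBank j) = 1 := by
  simp [totalLiab, spPost, xBank, Fintype.sum_sum_type, Fin.sum_univ_two]

lemma as_x (j : Fin m) :
    assets (spPost Sets M l β ρ) r (xBank j)
      = ∑ i, if j ∈ Sets i then r (sBank i) else 0 := by
  simp [assets, spPost, xBank, sBank, Fintype.sum_sum_type, Fin.sum_univ_two, mul_ite]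

lemma as_w (hu : r (uBank k m) = 0) :
    assets (spPost Sets M l β ρ) r (wBank k m)
      = ((l : ℝ) * M - ∑ i, ρ i) + ∑ i, r (sBank i) * (M - (Sets i).card)
        + ∑ j, r (xBank j) := by
  simp [assets, spPost, wBank, uBank, sBank, xBank, Fintype.sum_sum_type,
    Fin.sum_univ_two] at hu ⊢
  simp [hu]
  ring

lemma liab_net_w_nonneg (hm : (m : ℝ) ≤ M) (b : SPBank k m) :
    0 ≤ (spNet Sets M l).liab b (wBank k m) := by
  rcases b with (i | j) | x
  · have h1 : ((Sets i).card : ℝ) ≤ m := by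
      exact_mod_cast Finset.card_le_card (Finset.subset_univ (Sets i)) |>.trans
        (le_of_eq (by simp))
    simp [spNet, wBank]
    linarith
  · simp [spNet, wBank]
  · simp [spNet, wBank]

end helpers
/-- Backward direction of the Set Packing reduction: in any multi-trade of the outgoing
edges of `u`, a set-bank receiving a return `0 < ρ_i < M` ends up insolvent (so part of
the injected money is lost to default cost); hence in any Pareto-positive trade every
set-bank with positive return receives exactly `M`, and the sets receiving return `M`
are pairwise disjoint. -/
theorem stmt_16 {k m : ℕ} (Sets : Fin k → Finset (Fin m)) (l : ℕ) (M δ : ℝ)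
    (hM : (m : ℝ) < M) (hδ0 : 0 ≤ δ) (hδ1 : δ < 1)
    (β ρ : Fin k → ℝ)
    (hβ : ∀ i, β i ∈ Set.Icc (0:ℝ) 1)
    (hρ : ∀ i, 0 ≤ ρ i ∧ ρ i ≤ β i * M)
    (hbudget : ∑ i, ρ i ≤ (l : ℝ) * M)
    (r₀ r' : SPBank k m → ℝ)
    (hr₀ : IsClearingD (spNet Sets M l) δ r₀)
    (hr' : IsClearingD (spPost Sets M l β ρ) δ r') :
    (∀ i, 0 < ρ i → ρ i < M →
        assets (spPost Sets M l β ρ) r' (sBank i)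
          < totalLiab (spPost Sets M l β ρ) (sBank i)) ∧
    ((∀ b, assets (spNet Sets M l) r₀ b ≤ assets (spPost Sets M l β ρ) r' b) →
      (∀ i, 0 < ρ i → ρ i = M) ∧
      (∀ i j, i ≠ j → ρ i = M → ρ j = M → Disjoint (Sets i) (Sets j))) := by
  obtain ⟨hbox', hfix', -⟩ := hr'
  have hM0 : (0:ℝ) < M := lt_of_le_of_lt (Nat.cast_nonneg m) hM
  have hρM : ∀ i, ρ i ≤ M := by
    intro i
    have h1 := (hρ i).2
    have h2 := (hβ i).2
    nlinarith
  -- r' at u is 0 (whenever Fin k is nonempty)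
  have hru : ∀ _ : Fin k, r' (uBank k m) = 0 := by
    intro i
    have h := congrFun hfix' (uBank k m)
    rw [updateMapD, tl_u, as_u] at h
    have hk : (0:ℝ) < (k : ℝ) * M := by
      have : 0 < k := i.pos
      have : (1:ℝ) ≤ (k:ℝ) := by exact_mod_cast this
      nlinarith
    rw [if_neg (not_le.mpr hk)] at h
    simpa using h.symm
  constructor
  · intro i h0 h1
    rw [as_s _ _ _ _ _ _ (hru i) i, tl_s]
    exact h1
  · intro h
    rcases Nat.eq_zero_or_pos k with hk0 | hk0
    · subst hk0
      exact ⟨fun i => i.elim0, fun i => i.elim0⟩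
    have i0 : Fin k := ⟨0, hk0⟩
    have hru0 : r' (uBank k m) = 0 := hru i0
    -- recovery rate of set-banks
    have hS : ∀ i, r' (sBank i) = if M ≤ ρ i then 1 else δ * ρ i / M := by
      intro i
      have h := congrFun hfix' (sBank i)
      rw [updateMapD, tl_s, as_s _ _ _ _ _ _ hru0 i] at h
      exact h.symm
    have hSle : ∀ i, M * r' (sBank i) ≤ ρ i := by
      intro i
      rw [hS i]
      split
      · next hle => linarith
      · next hlt =>
        have hmd : M * (δ * ρ i / M) = δ * ρ i := by field_simp
        rw [hmd]
        nlinarith [(hρ i).1]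
    -- element-bank assets
    set A : Fin m → ℝ := fun j => ∑ i, if j ∈ Sets i then r' (sBank i) else 0 with hA
    have hAeq : ∀ j, assets (spPost Sets M l β ρ) r' (xBank j) = A j := by
      intro j; exact as_x _ _ _ _ _ _ j
    have hAnn : ∀ j, 0 ≤ A j := by
      intro j
      refine Finset.sum_nonneg fun i _ => ?_
      split
      · exact (hbox' (sBank i)).1
      · exact le_refl 0
    have hXle : ∀ j, r' (xBank j) ≤ A j := by
      intro j
      have h := congrFun hfix' (xBank j)
      rw [updateMapD, tl_x, hAeq j] at h
      rw [← h]
      split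
      · next hle => linarith
      · next hlt =>
        have := hAnn j
        nlinarith
    -- budget inequality at w
    have hw0 : (l:ℝ) * M ≤ assets (spNet Sets M l) r₀ (wBank k m) := by
      have hext : (spNet Sets M l).ext (wBank k m) = l * M := by simp [spNet, wBank]
      have hsum : 0 ≤ ∑ b, r₀ b * (spNet Sets M l).liab b (wBank k m) :=
        Finset.sum_nonneg fun b _ =>
          mul_nonneg (hr₀.1 b).1 (liab_net_w_nonneg Sets M l hM.le b)
      rw [assets, hext]
      linarith
    have hw := (hw0.trans (h (wBank k m)))
    rw [as_w _ _ _ _ _ _ hru0] at hw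
    -- sum manipulations
    have e2 : ∑ j, A j = ∑ i, r' (sBank i) * (Sets i).card := by
      rw [hA, Finset.sum_comm]
      refine Finset.sum_congr rfl fun i _ => ?_
      rw [Finset.sum_ite_mem, Finset.univ_inter, Finset.sum_const, nsmul_eq_mul, mul_comm]
    have hsum1 : 0 ≤ ∑ i, (ρ i - M * r' (sBank i)) :=
      Finset.sum_nonneg fun i _ => by linarith [hSle i]
    have hsum2 : 0 ≤ ∑ j, (A j - r' (xBank j)) :=
      Finset.sum_nonneg fun j _ => by linarith [hXle j]
    have e1 : ∑ i, r' (sBank i) * (M - (Sets i).card)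
        = ∑ i, M * r' (sBank i) - ∑ i, r' (sBank i) * (Sets i).card := by
      rw [← Finset.sum_sub_distrib]
      exact Finset.sum_congr rfl fun i _ => by ring
    have htot : (∑ i, (ρ i - M * r' (sBank i))) + (∑ j, (A j - r' (xBank j))) ≤ 0 := by
      rw [Finset.sum_sub_distrib, Finset.sum_sub_distrib, e2]
      rw [e1] at hw
      linarith
    have hz1 : ∑ i, (ρ i - M * r' (sBank i)) = 0 := le_antisymm (by linarith) hsum1
    have hz2 : ∑ j, (A j - r' (xBank j)) = 0 := le_antisymm (by linarith) hsum2
    have hterm1 : ∀ i, ρ i = M * r' (sBank i) := by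
      intro i
      have := (Finset.sum_eq_zero_iff_of_nonneg
        (fun i _ => by linarith [hSle i] : ∀ i ∈ Finset.univ, 0 ≤ ρ i - M * r' (sBank i))).mp
        hz1 i (Finset.mem_univ i)
      linarith
    have hterm2 : ∀ j, A j = r' (xBank j) := by
      intro j
      have := (Finset.sum_eq_zero_iff_of_nonneg
        (fun j _ => by linarith [hXle j] : ∀ j ∈ Finset.univ, 0 ≤ A j - r' (xBank j))).mp
        hz2 j (Finset.mem_univ j)
      linarith
    constructor
    · intro i hpos
      rcases le_or_gt M (ρ i) with hle | hlt
      · linarith [hρM i]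
      · exfalso
        have h1 := hterm1 i
        rw [hS i, if_neg (not_le.mpr hlt)] at h1
        have hmd : M * (δ * ρ i / M) = δ * ρ i := by field_simp
        rw [hmd] at h1
        nlinarith
    · intro i j hij hi hj
      have hri : r' (sBank i) = 1 := by rw [hS i, if_pos (le_of_eq hi.symm)]
      have hrj : r' (sBank j) = 1 := by rw [hS j, if_pos (le_of_eq hj.symm)]
      rw [Finset.disjoint_left]
      intro e hei hej
      have hA1 : A e ≤ 1 := by
        rw [hterm2 e]
        exact (hbox' (xBank e)).2
      have h2 : (2:ℝ) ≤ A e := by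
        have hsub : ∑ t ∈ ({i, j} : Finset (Fin k)),
            (if e ∈ Sets t then r' (sBank t) else 0) ≤ A e := by
          refine Finset.sum_le_sum_of_subset_of_nonneg (Finset.subset_univ _)
            fun t _ _ => ?_
          split
          · exact (hbox' (sBank t)).1
          · exact le_refl 0
        rw [Finset.sum_pair hij, if_pos hei, if_pos hej, hri, hrj] at hsub
        linarith
      linarith
end
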